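/- arXiv:math/0512192 — 3 statements merged into one kernel-verified Lean document; each statement's English description precedes it below -/
import Mathlib

section
/- Let H' be a Hilbert space and δ > 0. For f : ℝ → H' with ∫_ℝ ⟨f(s), e⟩ ds = 0 for all e ∈ H' (i.e., ∫_ℝ f = 0) and f sufficiently decaying, define G f(t) = ∫_{-∞}^t f(s) ds = -∫_t^{+∞} f(s) ds. Then for every integer ℓ ≥ 0 and α > 1, there is a constant C_{α,ℓ} independent of δ and f with ( ∫_ℝ |2πδt|^{2ℓ} ‖G f(t)‖² dt )^{1/2} ≤ (C_{α,ℓ}/δ) · ( ∫_ℝ (1 + 4π²δ²s²)^{ℓ+α} ‖f(s)‖² ds )^{1/2}. -/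
/-!
Write `u = 2πδ` and `w(s) = 1 + u²s²`. Since `∫ f = 0`, `Gf(t)` is also minus the integral of `f`
over `(t, ∞)`, so choosing the tail away from the origin gives `‖Gf(t)‖ ≤ ∫_{|s| ≥ |t|} ‖f‖`.
Cauchy–Schwarz against the weight `w^{ℓ+α}`, together with `(ut)^{2ℓ} ≤ w(s)^ℓ` for `|s| ≥ |t|`,
bounds `(ut)^{2ℓ} ‖Gf(t)‖²` by `(∫_{|s| ≥ |t|} w^{-α}) · ∫ w^{ℓ+α} ‖f‖²`. Integrating in `t` and
swapping the integrals leaves `∫ 2|s| w(s)^{-α} ds = 2 / ((α - 1) u²)`, finite exactly when `α > 1`.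
-/

open MeasureTheory Real SchwartzMap
open scoped ENNReal

section CauchySchwarz

variable {X : Type*} [MeasurableSpace X] {μ : Measure X}

theorem ENNReal.lintegral_mul_sq_le {f g : X → ℝ≥0∞} (hf : AEMeasurable f μ)
    (hg : AEMeasurable g μ) :
    (∫⁻ x, f x * g x ∂μ) ^ 2 ≤ (∫⁻ x, f x ^ 2 ∂μ) * ∫⁻ x, g x ^ 2 ∂μ := by
  have h := ENNReal.lintegral_mul_le_Lp_mul_Lq μ Real.HolderConjugate.two_two hf hg
  simp only [Pi.mul_apply, ENNReal.rpow_two] at h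
  calc (∫⁻ x, f x * g x ∂μ) ^ 2
      ≤ ((∫⁻ x, f x ^ 2 ∂μ) ^ (1 / 2 : ℝ) * (∫⁻ x, g x ^ 2 ∂μ) ^ (1 / 2 : ℝ)) ^ 2 := by
        gcongr
    _ = (∫⁻ x, f x ^ 2 ∂μ) * ∫⁻ x, g x ^ 2 ∂μ := by
        simp only [mul_pow, ← ENNReal.rpow_natCast, ← ENNReal.rpow_mul]
        norm_num

theorem lintegral_enorm_sq_le_weighted {E : Type*} [NormedAddCommGroup E] {f : X → E}
    {w : X → ℝ} (hf : AEStronglyMeasurable f μ) (hw : AEMeasurable w μ) (hw_pos : ∀ x, 0 < w x) :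
    (∫⁻ x, ‖f x‖ₑ ∂μ) ^ 2 ≤
      (∫⁻ x, ENNReal.ofReal (w x)⁻¹ ∂μ) * ∫⁻ x, ENNReal.ofReal (w x * ‖f x‖ ^ 2) ∂μ := by
  have hsplit : ∀ x, ‖f x‖ₑ =
      ENNReal.ofReal √(w x)⁻¹ * ENNReal.ofReal (√(w x) * ‖f x‖) := fun x => by
    rw [← ENNReal.ofReal_mul (by positivity), ← mul_assoc,
      ← Real.sqrt_mul (inv_nonneg.2 (hw_pos x).le),
      inv_mul_cancel₀ (hw_pos x).ne', Real.sqrt_one, one_mul, ofReal_norm]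
  have hsq : ∀ a : ℝ, 0 ≤ a → ENNReal.ofReal a ^ 2 = ENNReal.ofReal (a ^ 2) := fun a ha =>
    (ENNReal.ofReal_pow ha 2).symm
  simp only [hsplit]
  refine (ENNReal.lintegral_mul_sq_le ?_ ?_).trans_eq ?_
  · exact hw.inv.sqrt.ennreal_ofReal
  · exact (hw.sqrt.mul hf.norm.aemeasurable).ennreal_ofReal
  · simp only [hsq _ (Real.sqrt_nonneg _), hsq _ (mul_nonneg (Real.sqrt_nonneg _) (norm_nonneg _)),
      mul_pow, Real.sq_sqrt (inv_nonneg.2 (hw_pos _).le), Real.sq_sqrt (hw_pos _).le]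

end CauchySchwarz

theorem enorm_integral_Iic_le_lintegral_abs_le {E : Type*} [NormedAddCommGroup E]
    [NormedSpace ℝ E] {f : ℝ → E} (hf : Integrable f) (hf0 : ∫ s, f s = 0) (t : ℝ) :
    ‖∫ s in Set.Iic t, f s‖ₑ ≤ ∫⁻ s in {s | |t| ≤ |s|}, ‖f s‖ₑ := by
  rcases le_or_gt t 0 with ht | ht
  · refine (enorm_integral_le_lintegral_enorm _).trans (lintegral_mono_set fun s hs => ?_)
    have hs : s ≤ t := hs
    simp only [Set.mem_ofPred_eq, abs_of_nonpos ht, abs_of_nonpos (hs.trans ht)]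
    linarith
  · have htail : ∫ s in Set.Iic t, f s = -∫ s in Set.Ioi t, f s :=
      eq_neg_of_add_eq_zero_left <| by
        rw [intervalIntegral.integral_Iic_add_Ioi hf.integrableOn hf.integrableOn, hf0]
    rw [htail, enorm_neg]
    refine (enorm_integral_le_lintegral_enorm _).trans (lintegral_mono_set fun s hs => ?_)
    have hs : t < s := hs
    simp only [Set.mem_ofPred_eq, abs_of_pos ht, abs_of_pos (ht.trans hs)]
    exact hs.le

theorem pow_mul_rpow_neg_add_le {x w : ℝ} (hx : 0 ≤ x) (hxw : x ≤ w) (hw : 0 < w) (ℓ : ℕ)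
    (α : ℝ) : x ^ ℓ * w ^ (-((ℓ : ℝ) + α)) ≤ w ^ (-α) := by
  calc x ^ ℓ * w ^ (-((ℓ : ℝ) + α)) ≤ w ^ ℓ * w ^ (-((ℓ : ℝ) + α)) := by gcongr
    _ = w ^ (-α) := by rw [← Real.rpow_natCast, ← Real.rpow_add hw]; ring_nf

theorem lintegral_setLIntegral_abs_le {g : ℝ → ℝ≥0∞} (hg : Measurable g) :
    ∫⁻ t, ∫⁻ s in {s | |t| ≤ |s|}, g s = ∫⁻ s, ENNReal.ofReal (2 * |s|) * g s := by
  have hS : MeasurableSet {p : ℝ × ℝ | |p.1| ≤ |p.2|} :=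
    measurableSet_le measurable_fst.abs measurable_snd.abs
  calc ∫⁻ t, ∫⁻ s in {s | |t| ≤ |s|}, g s
      = ∫⁻ t, ∫⁻ s, {p : ℝ × ℝ | |p.1| ≤ |p.2|}.indicator (fun p => g p.2) (t, s) := by
        refine lintegral_congr fun t => ?_
        exact (lintegral_indicator (measurable_prodMk_left hS) g).symm
    _ = ∫⁻ s, ∫⁻ t, {p : ℝ × ℝ | |p.1| ≤ |p.2|}.indicator (fun p => g p.2) (t, s) :=
        lintegral_lintegral_swap ((hg.comp measurable_snd).indicator hS).aemeasurable
    _ = ∫⁻ s, ∫⁻ _ in Metric.closedBall (0 : ℝ) |s|, g s := by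
        refine lintegral_congr fun s => ?_
        rw [← lintegral_indicator Metric.isClosed_closedBall.measurableSet]
        refine lintegral_congr fun t => ?_
        by_cases hts : |t| ≤ |s| <;> simp [hts]
    _ = ∫⁻ s, ENNReal.ofReal (2 * |s|) * g s := by
        simp only [setLIntegral_const, Real.volume_closedBall]
        exact lintegral_congr fun s => mul_comm _ _

theorem lintegral_eq_two_mul_setLIntegral_Ioi_of_even {h : ℝ → ℝ≥0∞}
    (h_even : ∀ s, h (-s) = h s) :
    ∫⁻ s, h s = 2 * ∫⁻ s in Set.Ioi 0, h s := by
  have hneg : ∫⁻ s in Set.Iio 0, h s = ∫⁻ s in Set.Ioi 0, h s := by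
    rw [← (Measure.measurePreserving_neg volume).setLIntegral_comp_preimage_emb
      (Homeomorph.neg ℝ).measurableEmbedding h (Set.Iio 0)]
    simp [h_even]
  rw [← lintegral_add_compl h measurableSet_Iic, Set.compl_Iic, ← restrict_Iio_eq_restrict_Iic,
    hneg, two_mul]

theorem lintegral_ofReal_two_abs_mul_one_add_sq_rpow_neg {c α : ℝ} (hc : 0 < c) (hα : 1 < α) :
    ∫⁻ s, ENNReal.ofReal (2 * |s|) * ENNReal.ofReal ((1 + c * s ^ 2) ^ (-α)) =
      ENNReal.ofReal (2 / ((α - 1) * c)) := by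
  set φ : ℝ → ℝ := fun s => 2 * s * (1 + c * s ^ 2) ^ (-α)
  set F : ℝ → ℝ := fun s => -((α - 1) * c)⁻¹ * (1 + c * s ^ 2) ^ (1 - α)
  have hb : ∀ s : ℝ, 0 < 1 + c * s ^ 2 := fun s => by positivity
  have hF_cont : Continuous F :=
    continuous_const.mul ((by fun_prop : Continuous fun s : ℝ => 1 + c * s ^ 2).rpow_const
      fun s => Or.inl (hb s).ne')
  have hF_deriv : ∀ x ∈ Set.Ioi (0 : ℝ), HasDerivAt F (φ x) x := by
    intro x _
    have h := ((((hasDerivAt_pow 2 x).const_mul c).const_add 1).rpow_const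
      (p := 1 - α) (Or.inl (hb x).ne')).const_mul (-((α - 1) * c)⁻¹)
    refine h.congr_deriv ?_
    rw [show (1 : ℝ) - α - 1 = -α by ring]
    push_cast
    field_simp [(by linarith : α - 1 ≠ 0)]
    ring
  have hF_lim : Filter.Tendsto F Filter.atTop (nhds 0) := by
    have hbase : Filter.Tendsto (fun s : ℝ => 1 + c * s ^ 2) Filter.atTop Filter.atTop :=
      Filter.tendsto_atTop_add_const_left _ _
        ((Filter.tendsto_pow_atTop two_ne_zero).const_mul_atTop hc)
    have hpow := (tendsto_rpow_neg_atTop (by linarith : 0 < α - 1)).comp hbase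
    simpa [F, neg_sub] using hpow.const_mul (-((α - 1) * c)⁻¹)
  have hφ_nonneg : ∀ x ∈ Set.Ioi (0 : ℝ), 0 ≤ φ x := fun x hx => by
    have : (0 : ℝ) < x := hx
    positivity
  have hIoi : ∫⁻ s in Set.Ioi 0, ENNReal.ofReal (φ s) = ENNReal.ofReal ((α - 1) * c)⁻¹ := by
    rw [← ofReal_integral_eq_lintegral_ofReal
        (integrableOn_Ioi_deriv_of_nonneg hF_cont.continuousWithinAt hF_deriv hφ_nonneg hF_lim)
        ((ae_restrict_iff' measurableSet_Ioi).2 (ae_of_all _ hφ_nonneg)),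
      integral_Ioi_of_hasDerivAt_of_nonneg hF_cont.continuousWithinAt hF_deriv hφ_nonneg hF_lim]
    simp [F]
  rw [lintegral_eq_two_mul_setLIntegral_Ioi_of_even (fun s => by simp),
    setLIntegral_congr_fun measurableSet_Ioi (fun s (hs : 0 < s) => by
      rw [← ENNReal.ofReal_mul (by positivity), abs_of_pos hs]), hIoi,
    ← ENNReal.ofReal_ofNat 2, ← ENNReal.ofReal_mul zero_le_two, div_eq_mul_inv]

section Primitive

variable {E : Type*} [NormedAddCommGroup E] [NormedSpace ℝ E]

theorem ofReal_weight_mul_norm_integral_Iic_sq_le {f : ℝ → E} (hf : Integrable f)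
    (hf0 : ∫ s, f s = 0) (u : ℝ) (ℓ : ℕ) (α t : ℝ) :
    ENNReal.ofReal (|u * t| ^ (2 * ℓ) * ‖∫ s in Set.Iic t, f s‖ ^ 2) ≤
      (∫⁻ s in {s | |t| ≤ |s|}, ENNReal.ofReal ((1 + u ^ 2 * s ^ 2) ^ (-α))) *
        ∫⁻ s, ENNReal.ofReal ((1 + u ^ 2 * s ^ 2) ^ ((ℓ : ℝ) + α) * ‖f s‖ ^ 2) := by
  set A := {s : ℝ | |t| ≤ |s|}
  set w : ℝ → ℝ := fun s => (1 + u ^ 2 * s ^ 2) ^ ((ℓ : ℝ) + α)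
  have hb : ∀ s : ℝ, 0 < 1 + u ^ 2 * s ^ 2 := fun s => by positivity
  have hw_meas : Measurable w := by fun_prop
  have hweight : ∀ s ∈ A, ENNReal.ofReal (|u * t| ^ (2 * ℓ)) * ENNReal.ofReal (w s)⁻¹ ≤
      ENNReal.ofReal ((1 + u ^ 2 * s ^ 2) ^ (-α)) := fun s (hs : |t| ≤ |s|) => by
    have hts : (u * t) ^ 2 ≤ 1 + u ^ 2 * s ^ 2 := by
      nlinarith [sq_le_sq.2 hs, sq_nonneg u]
    rw [← ENNReal.ofReal_mul (by positivity), pow_mul, sq_abs, ← Real.rpow_neg (hb s).le]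
    exact ENNReal.ofReal_le_ofReal (pow_mul_rpow_neg_add_le (sq_nonneg _) hts (hb s) ℓ α)
  calc ENNReal.ofReal (|u * t| ^ (2 * ℓ) * ‖∫ s in Set.Iic t, f s‖ ^ 2)
      = ENNReal.ofReal (|u * t| ^ (2 * ℓ)) * ‖∫ s in Set.Iic t, f s‖ₑ ^ 2 := by
        rw [ENNReal.ofReal_mul (by positivity), ENNReal.ofReal_pow (norm_nonneg _), ofReal_norm]
    _ ≤ ENNReal.ofReal (|u * t| ^ (2 * ℓ)) * (∫⁻ s in A, ‖f s‖ₑ) ^ 2 := by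
        gcongr
        exact enorm_integral_Iic_le_lintegral_abs_le hf hf0 t
    _ ≤ ENNReal.ofReal (|u * t| ^ (2 * ℓ)) *
          ((∫⁻ s in A, ENNReal.ofReal (w s)⁻¹) * ∫⁻ s in A, ENNReal.ofReal (w s * ‖f s‖ ^ 2)) := by
        gcongr
        exact lintegral_enorm_sq_le_weighted hf.aestronglyMeasurable.restrict
          hw_meas.aemeasurable fun s => Real.rpow_pos_of_pos (hb s) _
    _ = (∫⁻ s in A, ENNReal.ofReal (|u * t| ^ (2 * ℓ)) * ENNReal.ofReal (w s)⁻¹) *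
          ∫⁻ s in A, ENNReal.ofReal (w s * ‖f s‖ ^ 2) := by
        rw [lintegral_const_mul' _ _ ENNReal.ofReal_ne_top, mul_assoc]
    _ ≤ _ := by
        gcongr ?_ * ?_
        · exact setLIntegral_mono (by fun_prop) hweight
        · exact setLIntegral_le_lintegral _ _

theorem lintegral_ofReal_weight_mul_norm_integral_Iic_sq_le {f : ℝ → E} (hf : Integrable f)
    (hf0 : ∫ s, f s = 0) {u : ℝ} (hu : u ≠ 0) (ℓ : ℕ) {α : ℝ} (hα : 1 < α) :
    ∫⁻ t, ENNReal.ofReal (|u * t| ^ (2 * ℓ) * ‖∫ s in Set.Iic t, f s‖ ^ 2) ≤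
      ENNReal.ofReal (2 / ((α - 1) * u ^ 2)) *
        ∫⁻ s, ENNReal.ofReal ((1 + u ^ 2 * s ^ 2) ^ ((ℓ : ℝ) + α) * ‖f s‖ ^ 2) := by
  set I := ∫⁻ s, ENNReal.ofReal ((1 + u ^ 2 * s ^ 2) ^ ((ℓ : ℝ) + α) * ‖f s‖ ^ 2)
  rcases eq_or_ne I ⊤ with hI | hI
  · rw [hI, ENNReal.mul_top (ENNReal.ofReal_pos.2 (by positivity)).ne']
    exact le_top
  calc ∫⁻ t, ENNReal.ofReal (|u * t| ^ (2 * ℓ) * ‖∫ s in Set.Iic t, f s‖ ^ 2)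
      ≤ ∫⁻ t, (∫⁻ s in {s | |t| ≤ |s|}, ENNReal.ofReal ((1 + u ^ 2 * s ^ 2) ^ (-α))) * I :=
        lintegral_mono fun t => ofReal_weight_mul_norm_integral_Iic_sq_le hf hf0 u ℓ α t
    _ = ENNReal.ofReal (2 / ((α - 1) * u ^ 2)) * I := by
        rw [lintegral_mul_const' _ _ hI, lintegral_setLIntegral_abs_le (by fun_prop),
          lintegral_ofReal_two_abs_mul_one_add_sq_rpow_neg (by positivity) hα]

end Primitive

theorem SchwartzMap.integrable_one_add_mul_sq_rpow_mul_norm_sq {E : Type*} [NormedAddCommGroup E]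
    [NormedSpace ℝ E] (f : 𝓢(ℝ, E)) {c : ℝ} (hc : 0 ≤ c) (β : ℝ) :
    Integrable fun s => (1 + c * s ^ 2) ^ β * ‖f s‖ ^ 2 := by
  set k := ⌈β⌉₊
  set M := max 1 c
  set S := (Finset.Iic (2 * k, 0)).sup (fun m => SchwartzMap.seminorm ℝ m.1 m.2) f
  have hdecay : ∀ s : ℝ, (1 + |s|) ^ (2 * k) * ‖f s‖ ≤ 2 ^ (2 * k) * S := fun s => by
    simpa [norm_iteratedFDeriv_zero] using
      f.one_add_le_sup_seminorm_apply (m := (2 * k, 0)) le_rfl le_rfl s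
  have hweight : ∀ s : ℝ, (1 + c * s ^ 2) ^ β ≤ M ^ k * (1 + |s|) ^ (2 * k) := fun s => by
    have hquad : 1 + c * s ^ 2 ≤ M * (1 + |s|) ^ 2 := by
      nlinarith [le_max_left 1 c, le_max_right 1 c, abs_nonneg s, sq_abs s,
        mul_nonneg (sub_nonneg.2 (le_max_right 1 c)) (sq_nonneg s)]
    calc (1 + c * s ^ 2) ^ β ≤ (1 + c * s ^ 2) ^ k := by
          rw [← Real.rpow_natCast _ k]
          exact Real.rpow_le_rpow_of_exponent_le (le_add_of_nonneg_right (by positivity))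
            (Nat.le_ceil β)
      _ ≤ (M * (1 + |s|) ^ 2) ^ k := by gcongr
      _ = M ^ k * (1 + |s|) ^ (2 * k) := by rw [mul_pow, ← pow_mul, mul_comm 2 k]
  have hmeas : Continuous fun s => (1 + c * s ^ 2) ^ β * ‖f s‖ ^ 2 :=
    ((by fun_prop : Continuous fun s : ℝ => 1 + c * s ^ 2).rpow_const
      fun s => Or.inl (by positivity)).mul (f.continuous.norm.pow 2)
  refine (f.integrable.norm.const_mul (M ^ k * 2 ^ (2 * k) * S)).mono' hmeas.aestronglyMeasurable
    (ae_of_all _ fun s => ?_)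
  rw [Real.norm_of_nonneg (by positivity)]
  calc (1 + c * s ^ 2) ^ β * ‖f s‖ ^ 2 = (1 + c * s ^ 2) ^ β * ‖f s‖ * ‖f s‖ := by ring
    _ ≤ M ^ k * (1 + |s|) ^ (2 * k) * ‖f s‖ * ‖f s‖ := by gcongr; exact hweight s
    _ = M ^ k * ((1 + |s|) ^ (2 * k) * ‖f s‖) * ‖f s‖ := by ring
    _ ≤ M ^ k * (2 ^ (2 * k) * S) * ‖f s‖ := by gcongr M ^ k * ?_ * _; exact hdecay s
    _ = M ^ k * 2 ^ (2 * k) * S * ‖f s‖ := by ring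

theorem integral_le_mul_integral_of_lintegral_ofReal_le {X : Type*} [MeasurableSpace X]
    {μ : Measure X} {F R : X → ℝ} {K : ℝ} (hF : ∀ x, 0 ≤ F x) (hR : Integrable R μ)
    (hR0 : ∀ x, 0 ≤ R x) (hK : 0 ≤ K)
    (h : ∫⁻ x, ENNReal.ofReal (F x) ∂μ ≤ ENNReal.ofReal K * ∫⁻ x, ENNReal.ofReal (R x) ∂μ) :
    ∫ x, F x ∂μ ≤ K * ∫ x, R x ∂μ := by
  by_cases hFi : Integrable F μ
  · rw [← ENNReal.ofReal_le_ofReal_iff (mul_nonneg hK (integral_nonneg hR0)),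
      ENNReal.ofReal_mul hK, ofReal_integral_eq_lintegral_ofReal hFi (ae_of_all _ hF),
      ofReal_integral_eq_lintegral_ofReal hR (ae_of_all _ hR0)]
    exact h
  · rw [integral_undef hFi]
    exact mul_nonneg hK (integral_nonneg hR0)

theorem stmt10_general (H' : Type) [NormedAddCommGroup H'] [InnerProductSpace ℝ H'] :
    ∀ (ℓ : ℕ) (α : ℝ), 1 < α → ∃ C : ℝ, 0 < C ∧
      ∀ δ : ℝ, 0 < δ → ∀ f : SchwartzMap ℝ H', (∫ s : ℝ, f s) = 0 →
        Real.sqrt (∫ t : ℝ, |2 * π * δ * t| ^ (2 * ℓ) * ‖∫ s in Set.Iic t, f s‖ ^ 2) ≤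
          (C / δ) * Real.sqrt
            (∫ s : ℝ, (1 + 4 * π ^ 2 * δ ^ 2 * s ^ 2) ^ ((ℓ : ℝ) + α) * ‖f s‖ ^ 2) := by
  intro ℓ α hα
  have hα1 : 0 < α - 1 := by linarith
  refine ⟨√(2 / (α - 1)) / (2 * π), by positivity, fun δ hδ f hf => ?_⟩
  set u := 2 * π * δ
  have hu : 0 < u := by positivity
  have hweight : ∀ s : ℝ, 1 + 4 * π ^ 2 * δ ^ 2 * s ^ 2 = 1 + u ^ 2 * s ^ 2 := fun s => by ring
  have hC : √(2 / (α - 1)) / (2 * π) / δ = √(2 / ((α - 1) * u ^ 2)) := by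
    rw [div_div, ← div_div 2, Real.sqrt_div' _ (sq_nonneg u), Real.sqrt_sq hu.le]
  simp only [hweight, hC]
  rw [← Real.sqrt_mul (by positivity)]
  exact Real.sqrt_le_sqrt <| integral_le_mul_integral_of_lintegral_ofReal_le
    (fun t => by positivity) (f.integrable_one_add_mul_sq_rpow_mul_norm_sq (sq_nonneg u) _)
    (fun s => by positivity) (by positivity)
    (lintegral_ofReal_weight_mul_norm_integral_Iic_sq_le f.integrable hf hu.ne' ℓ hα)

/-- Weighted estimate for the primitive of a zero-mean Schwartz function: for all
`ℓ ∈ ℕ`, `α > 1`, there is `C_{α,ℓ} > 0`, independent of `δ > 0` and `f`, with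
`(∫ |2πδt|^{2ℓ} ‖Gf(t)‖² dt)^{1/2} ≤ (C/δ)(∫ (1+4π²δ²s²)^{ℓ+α} ‖f(s)‖² ds)^{1/2}`,
where `Gf(t) = ∫_{-∞}^t f(s) ds`. -/
theorem stmt10 (H' : Type) [NormedAddCommGroup H'] [InnerProductSpace ℝ H']
    [CompleteSpace H'] :
    ∀ (ℓ : ℕ) (α : ℝ), 1 < α → ∃ C : ℝ, 0 < C ∧
      ∀ δ : ℝ, 0 < δ → ∀ f : SchwartzMap ℝ H', (∫ s : ℝ, f s) = 0 →
        Real.sqrt (∫ t : ℝ, |2 * π * δ * t| ^ (2 * ℓ) * ‖∫ s in Set.Iic t, f s‖ ^ 2) ≤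
          (C / δ) * Real.sqrt
            (∫ s : ℝ, (1 + 4 * π ^ 2 * δ ^ 2 * s ^ 2) ^ ((ℓ : ℝ) + α) * ‖f s‖ ^ 2) :=
  stmt10_general H'
end

section
/- Let f : ℝ → H' be a continuous compactly supported function with values in a Hilbert space H', and let G f(t) = ∫_{-∞}^t f(s) ds. For any α > 1/2 and δ > 0 there is C_α > 0 with sup_{t ∈ ℝ} ‖G f(t)‖ ≤ (C_α/δ^{1/2}) · ( ∫_ℝ (1+4π²δ²s²)^α ‖f(s)‖² ds )^{1/2}; moreover every bounded continuous u : ℝ → H' defines a continuous linear functional on the weighted space, namely |∫_ℝ ⟨u(s), v(s)⟩ ds| ≤ (C_α/δ^{1/2}) ‖u‖_∞ ( ∫_ℝ (1+4π²δ²s²)^α ‖v(s)‖² ds )^{1/2}. -/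
open MeasureTheory Real

/-!
Write `w(s) = 1 + (2πδ s)²`. By Cauchy–Schwarz,
`∫ ‖f‖ = ∫ w^{-α/2} · w^{α/2} ‖f‖ ≤ (∫ w^{-α})^{1/2} (∫ w^α ‖f‖²)^{1/2}`, and the substitution
`x = 2πδ s` gives `∫ w^{-α} = I_α / (2πδ)` with `I_α = ∫ (1 + x²)^{-α} dx`, which is finite exactly
when `α > 1/2`. Both claims then follow from `‖Gf(t)‖ ≤ ∫ ‖f‖` and `|∫ ⟨u, v⟩| ≤ ‖u‖_∞ ∫ ‖v‖`.
-/

section CauchySchwarz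

variable {X : Type*} [MeasurableSpace X] {μ : Measure X} {g h : X → ℝ}

theorem memLp_two_sqrt (hg : Integrable g μ) (hg0 : 0 ≤ᵐ[μ] g) :
    MemLp (fun x => √(g x)) 2 μ :=
  (memLp_two_iff_integrable_sq (continuous_sqrt.comp_aestronglyMeasurable hg.1)).2 <|
    hg.congr <| hg0.mono fun _ hx => (sq_sqrt hx).symm

theorem integrable_sqrt_mul (hg : Integrable g μ) (hg0 : 0 ≤ᵐ[μ] g) (hh : Integrable h μ)
    (hh0 : 0 ≤ᵐ[μ] h) : Integrable (fun x => √(g x * h x)) μ :=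
  ((memLp_two_sqrt hg hg0).integrable_mul (memLp_two_sqrt hh hh0)).congr <|
    hg0.mono fun x hx => (sqrt_mul hx (h x)).symm

theorem integral_sqrt_mul_le (hg : Integrable g μ) (hg0 : 0 ≤ᵐ[μ] g) (hh : Integrable h μ)
    (hh0 : 0 ≤ᵐ[μ] h) :
    ∫ x, √(g x * h x) ∂μ ≤ √(∫ x, g x ∂μ) * √(∫ x, h x ∂μ) := by
  have hsq : ∀ {k : X → ℝ}, 0 ≤ᵐ[μ] k → ∫ x, √(k x) ^ (2 : ℝ) ∂μ = ∫ x, k x ∂μ := fun hk0 =>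
    integral_congr_ae <| hk0.mono fun x hx => by
      simp only [rpow_two, sq_sqrt hx]
  have holder := integral_mul_le_Lp_mul_Lq_of_nonneg HolderConjugate.two_two
    (.of_forall fun x => sqrt_nonneg (g x)) (.of_forall fun x => sqrt_nonneg (h x))
    (by simpa using memLp_two_sqrt hg hg0) (by simpa using memLp_two_sqrt hh hh0)
  rw [hsq hg0, hsq hh0, ← sqrt_eq_rpow, ← sqrt_eq_rpow] at holder
  calc ∫ x, √(g x * h x) ∂μ = ∫ x, √(g x) * √(h x) ∂μ :=
        integral_congr_ae <| hg0.mono fun x hx => sqrt_mul hx (h x)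
    _ ≤ _ := holder

end CauchySchwarz

section Weighted

variable {X E : Type*} [MeasurableSpace X] [NormedAddCommGroup E] {μ : Measure X}
  {ρ : X → ℝ} {F : X → E}

theorem norm_eq_sqrt_inv_mul_mul_norm_sq {r : ℝ} (hr : r ≠ 0) (y : E) :
    ‖y‖ = √(r⁻¹ * (r * ‖y‖ ^ 2)) := by
  rw [inv_mul_cancel_left₀ hr, sqrt_sq (norm_nonneg y)]

theorem integrable_norm_of_integrable_inv_of_integrable_mul_norm_sq (hρ : ∀ x, 0 < ρ x)
    (hρinv : Integrable (fun x => (ρ x)⁻¹) μ) (hF : Integrable (fun x => ρ x * ‖F x‖ ^ 2) μ) :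
    Integrable (fun x => ‖F x‖) μ :=
  (integrable_sqrt_mul hρinv (.of_forall fun x => (inv_pos.2 (hρ x)).le) hF
    (.of_forall fun x => by positivity [hρ x])).congr <|
    .of_forall fun x => (norm_eq_sqrt_inv_mul_mul_norm_sq (hρ x).ne' (F x)).symm

theorem integral_norm_le_sqrt_integral_inv_mul_sqrt (hρ : ∀ x, 0 < ρ x)
    (hρinv : Integrable (fun x => (ρ x)⁻¹) μ) (hF : Integrable (fun x => ρ x * ‖F x‖ ^ 2) μ) :
    ∫ x, ‖F x‖ ∂μ ≤ √(∫ x, (ρ x)⁻¹ ∂μ) * √(∫ x, ρ x * ‖F x‖ ^ 2 ∂μ) := by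
  calc ∫ x, ‖F x‖ ∂μ = ∫ x, √((ρ x)⁻¹ * (ρ x * ‖F x‖ ^ 2)) ∂μ :=
        integral_congr_ae <| .of_forall fun x => norm_eq_sqrt_inv_mul_mul_norm_sq (hρ x).ne' (F x)
    _ ≤ _ := integral_sqrt_mul_le hρinv (.of_forall fun x => (inv_pos.2 (hρ x)).le) hF
        (.of_forall fun x => by positivity [hρ x])

end Weighted

theorem integrable_one_add_sq_rpow_neg {α : ℝ} (hα : 1 / 2 < α) :
    Integrable fun x : ℝ => (1 + x ^ 2) ^ (-α) := by
  have := integrable_rpow_neg_one_add_norm_sq (E := ℝ) (μ := volume) (r := 2 * α)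
    (by rw [Module.finrank_self]; push_cast; linarith)
  simpa [neg_div] using this

theorem integral_one_add_sq_rpow_neg_pos {α : ℝ} (hα : 1 / 2 < α) :
    0 < ∫ x : ℝ, (1 + x ^ 2) ^ (-α) := by
  refine (integral_pos_iff_support_of_nonneg (fun x => by positivity)
    (integrable_one_add_sq_rpow_neg hα)).2 ?_
  rw [Function.support_eq_univ fun x => (rpow_pos_of_pos (by positivity) _).ne']
  simp

/-- The multiplier of `(I - π(Y)²)^α` when `π(Y)` acts as multiplication by `2πiδs`. -/
noncomputable def sobolevWeight (δ α s : ℝ) : ℝ := (1 + 4 * π ^ 2 * δ ^ 2 * s ^ 2) ^ α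

section SobolevWeight

variable {α δ : ℝ}

theorem sobolevWeight_pos (s : ℝ) : 0 < sobolevWeight δ α s := by
  unfold sobolevWeight; positivity

theorem continuous_sobolevWeight : Continuous (sobolevWeight δ α) := by
  unfold sobolevWeight
  exact (by fun_prop : Continuous fun s : ℝ => 1 + 4 * π ^ 2 * δ ^ 2 * s ^ 2).rpow_const
    fun s => .inl (by positivity)

theorem inv_sobolevWeight (s : ℝ) :
    (sobolevWeight δ α s)⁻¹ = (1 + (2 * π * δ * s) ^ 2) ^ (-α) := by
  rw [sobolevWeight, rpow_neg (by positivity)]; ring_nf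

theorem integrable_inv_sobolevWeight (hα : 1 / 2 < α) (hδ : δ ≠ 0) :
    Integrable fun s => (sobolevWeight δ α s)⁻¹ := by
  simpa only [inv_sobolevWeight] using
    (integrable_one_add_sq_rpow_neg hα).comp_mul_left' (by positivity : 2 * π * δ ≠ 0)

theorem integral_inv_sobolevWeight (hδ : 0 < δ) :
    ∫ s, (sobolevWeight δ α s)⁻¹ = (∫ x : ℝ, (1 + x ^ 2) ^ (-α)) / (2 * π * δ) := by
  simp_rw [inv_sobolevWeight]
  rw [Measure.integral_comp_mul_left (fun x : ℝ => (1 + x ^ 2) ^ (-α)), smul_eq_mul,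
    abs_of_pos (by positivity : 0 < (2 * π * δ)⁻¹), inv_mul_eq_div]

theorem integral_norm_le_sqrt_integral_sobolevWeight_mul_norm_sq {E : Type*}
    [NormedAddCommGroup E] {F : ℝ → E} (hα : 1 / 2 < α) (hδ : 0 < δ)
    (hF : Integrable fun s => sobolevWeight δ α s * ‖F s‖ ^ 2) :
    ∫ s, ‖F s‖ ≤ √((∫ x : ℝ, (1 + x ^ 2) ^ (-α)) / (2 * π)) / √δ *
      √(∫ s, sobolevWeight δ α s * ‖F s‖ ^ 2) := by
  rw [← sqrt_div' _ hδ.le, div_div, ← integral_inv_sobolevWeight hδ]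
  exact integral_norm_le_sqrt_integral_inv_mul_sqrt sobolevWeight_pos
    (integrable_inv_sobolevWeight hα hδ.ne') hF

end SobolevWeight

theorem stmt11_general (H' : Type) [NormedAddCommGroup H'] [InnerProductSpace ℝ H'] :
    ∀ α : ℝ, 1 / 2 < α → ∃ C : ℝ, 0 < C ∧
      ∀ δ : ℝ, 0 < δ →
        (∀ f : ℝ → H', Continuous f → HasCompactSupport f → ∀ t : ℝ,
          ‖∫ s in Set.Iic t, f s‖ ≤ (C / Real.sqrt δ) *
            Real.sqrt (∫ s : ℝ, (1 + 4 * π ^ 2 * δ ^ 2 * s ^ 2) ^ α * ‖f s‖ ^ 2)) ∧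
        (∀ (u v : ℝ → H') (Mu : ℝ), Continuous u → (∀ s : ℝ, ‖u s‖ ≤ Mu) →
          AEStronglyMeasurable v volume →
          Integrable (fun s : ℝ => (1 + 4 * π ^ 2 * δ ^ 2 * s ^ 2) ^ α * ‖v s‖ ^ 2) →
          |∫ s : ℝ, (inner ℝ (u s) (v s) : ℝ)| ≤ (C / Real.sqrt δ) * Mu *
            Real.sqrt (∫ s : ℝ, (1 + 4 * π ^ 2 * δ ^ 2 * s ^ 2) ^ α * ‖v s‖ ^ 2)) := by
  intro α hα
  have hI := integral_one_add_sq_rpow_neg_pos hα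
  refine ⟨_, sqrt_pos.2 (div_pos hI two_pi_pos), fun δ hδ => ⟨?_, ?_⟩⟩
  · intro f hf hfc t
    have hF : Integrable fun s => sobolevWeight δ α s * ‖f s‖ ^ 2 :=
      (continuous_sobolevWeight.mul (hf.norm.pow 2)).integrable_of_hasCompactSupport
        (hfc.norm.comp_left (g := fun r : ℝ => r ^ 2) (zero_pow two_ne_zero)).mul_left
    have hfi := integrable_norm_of_integrable_inv_of_integrable_mul_norm_sq sobolevWeight_pos
      (integrable_inv_sobolevWeight hα hδ.ne') hF
    calc ‖∫ s in Set.Iic t, f s‖ ≤ ∫ s in Set.Iic t, ‖f s‖ := norm_integral_le_integral_norm f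
      _ ≤ ∫ s, ‖f s‖ := setIntegral_le_integral hfi (.of_forall fun s => norm_nonneg _)
      _ ≤ _ := integral_norm_le_sqrt_integral_sobolevWeight_mul_norm_sq hα hδ hF
  · intro u v Mu _ hMu _ hv
    have hvi := integrable_norm_of_integrable_inv_of_integrable_mul_norm_sq sobolevWeight_pos
      (integrable_inv_sobolevWeight hα hδ.ne') hv
    have hMu0 : 0 ≤ Mu := (norm_nonneg _).trans (hMu 0)
    rw [← norm_eq_abs]
    calc ‖∫ s, inner ℝ (u s) (v s)‖ ≤ ∫ s, Mu * ‖v s‖ :=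
          norm_integral_le_of_norm_le (hvi.const_mul Mu) <| .of_forall fun s =>
            (norm_inner_le_norm _ _).trans (mul_le_mul_of_nonneg_right (hMu s) (norm_nonneg _))
      _ = Mu * ∫ s, ‖v s‖ := integral_const_mul Mu _
      _ ≤ Mu * (_ * √(∫ s, sobolevWeight δ α s * ‖v s‖ ^ 2)) := mul_le_mul_of_nonneg_left
          (integral_norm_le_sqrt_integral_sobolevWeight_mul_norm_sq hα hδ hv) hMu0
      _ = _ := by unfold sobolevWeight; ring

/-- (a) Sup-norm bound for the Green operator `Gf(t) = ∫_{-∞}^t f(s) ds` on continuous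
compactly supported `f : ℝ → H'`, in terms of the weighted norm
`(∫ (1+4π²δ²s²)^α ‖f(s)‖² ds)^{1/2}` for `α > 1/2`; and (b) every bounded continuous
`u : ℝ → H'` defines a continuous functional on the weighted space:
`|∫ ⟨u(s),v(s)⟩ ds| ≤ (C/δ^{1/2}) ‖u‖_∞ (∫ (1+4π²δ²s²)^α ‖v(s)‖² ds)^{1/2}`. -/
theorem stmt11 (H' : Type) [NormedAddCommGroup H'] [InnerProductSpace ℝ H']
    [CompleteSpace H'] :
    ∀ α : ℝ, 1 / 2 < α → ∃ C : ℝ, 0 < C ∧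
      ∀ δ : ℝ, 0 < δ →
        (∀ f : ℝ → H', Continuous f → HasCompactSupport f → ∀ t : ℝ,
          ‖∫ s in Set.Iic t, f s‖ ≤ (C / Real.sqrt δ) *
            Real.sqrt (∫ s : ℝ, (1 + 4 * π ^ 2 * δ ^ 2 * s ^ 2) ^ α * ‖f s‖ ^ 2)) ∧
        (∀ (u v : ℝ → H') (Mu : ℝ), Continuous u → (∀ s : ℝ, ‖u s‖ ≤ Mu) →
          AEStronglyMeasurable v volume →
          Integrable (fun s : ℝ => (1 + 4 * π ^ 2 * δ ^ 2 * s ^ 2) ^ α * ‖v s‖ ^ 2) →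
          |∫ s : ℝ, (inner ℝ (u s) (v s) : ℝ)| ≤ (C / Real.sqrt δ) * Mu *
            Real.sqrt (∫ s : ℝ, (1 + 4 * π ^ 2 * δ ^ 2 * s ^ 2) ^ α * ‖v s‖ ^ 2)) :=
  stmt11_general H'
end

section
/- Let f : ℝ → H' be a Schwartz function with values in a Hilbert space H' such that ∫_ℝ f(s) ds = 0. Then its primitive G(t) = ∫_{-∞}^t f(s) ds is again a Schwartz function ℝ → H'. -/
open MeasureTheory SchwartzMap

/-- A zero-mean Schwartz function `f : ℝ → H'` has a Schwartz primitive
`G(t) = ∫_{-∞}^t f(s) ds`. -/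
theorem stmt18 (H' : Type) [NormedAddCommGroup H'] [InnerProductSpace ℝ H']
    [CompleteSpace H'] (f : 𝓢(ℝ, H')) (hf : (∫ s : ℝ, f s) = 0) :
    ∃ g : 𝓢(ℝ, H'), ∀ t : ℝ, g t = ∫ s in Set.Iic t, f s := by
  set G : ℝ → H' := fun t => ∫ s in Set.Iic t, f s with hG
  have hint : Integrable (f : ℝ → H') := f.integrable
  have hGeq : ∀ t : ℝ, G t = G 0 + ∫ s in (0:ℝ)..t, f s := by
    intro t
    rw [← intervalIntegral.integral_Iic_sub_Iic (hint.integrableOn) (hint.integrableOn)]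
    simp [hG]
  have hderiv : ∀ t : ℝ, HasDerivAt G (f t) t := by
    intro t
    have : HasDerivAt (fun u => G 0 + ∫ s in (0:ℝ)..u, f s) (f t) t := by
      refine HasDerivAt.const_add _ ?_
      exact intervalIntegral.integral_hasDerivAt_right hint.intervalIntegrable
        f.continuous.aestronglyMeasurable.stronglyMeasurableAtFilter f.continuous.continuousAt
    exact this.congr_of_eventuallyEq (Filter.Eventually.of_forall fun u => hGeq u)
  have hderivG : deriv G = f := funext fun t => (hderiv t).deriv
  have hsmooth : ContDiff ℝ ((⊤ : ℕ∞) : WithTop ℕ∞) G := by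
    rw [contDiff_infty_iff_deriv]
    exact ⟨fun t => (hderiv t).differentiableAt, hderivG ▸ f.smooth ⊤⟩
  -- the negative representation for t ≥ 0
  have hGneg : ∀ t : ℝ, G t = -∫ s in Set.Ioi t, f s := by
    intro t
    have := integral_add_compl (measurableSet_Iic (a := t)) hint
    rw [Set.compl_Iic, hf] at this
    have h2 : G t + ∫ s in Set.Ioi t, f s = 0 := by
      simpa [hG] using this
    exact eq_neg_of_add_eq_zero_left h2
  refine ⟨⟨G, hsmooth, ?_⟩, fun t => rfl⟩
  intro k n
  match n with
  | 0 =>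
    refine ⟨∫ s : ℝ, ‖s‖ ^ k * ‖f s‖, fun t => ?_⟩
    have hI : Integrable (fun s : ℝ => ‖s‖ ^ k * ‖f s‖) := f.integrable_pow_mul volume k
    have key : ∀ (S : Set ℝ), MeasurableSet S → (∀ s ∈ S, ‖t‖ ≤ ‖s‖) →
        ‖t‖ ^ k * ‖∫ s in S, f s‖ ≤ ∫ s : ℝ, ‖s‖ ^ k * ‖f s‖ := by
      intro S hS hle
      calc ‖t‖ ^ k * ‖∫ s in S, f s‖
          ≤ ‖t‖ ^ k * ∫ s in S, ‖f s‖ :=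
            mul_le_mul_of_nonneg_left (norm_integral_le_integral_norm _) (by positivity)
        _ = ∫ s in S, ‖t‖ ^ k * ‖f s‖ := (integral_const_mul _ _).symm
        _ ≤ ∫ s in S, ‖s‖ ^ k * ‖f s‖ := by
            refine integral_mono_of_nonneg (Filter.Eventually.of_forall fun s => by positivity)
              (hI.restrict) ?_
            filter_upwards [ae_restrict_mem hS] with s hs
            gcongr
            exact hle s hs
        _ ≤ ∫ s : ℝ, ‖s‖ ^ k * ‖f s‖ :=
            setIntegral_le_integral hI (Filter.Eventually.of_forall fun s => by positivity)
    rcases le_or_gt t 0 with ht | ht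
    · have := key (Set.Iic t) measurableSet_Iic (fun s hs => by
        simp only [Set.mem_Iic] at hs
        rw [Real.norm_eq_abs, Real.norm_eq_abs, abs_of_nonpos ht, abs_of_nonpos (hs.trans ht)]
        linarith)
      simpa [norm_iteratedFDeriv_zero, hG] using this
    · have := key (Set.Ioi t) measurableSet_Ioi (fun s hs => by
        simp only [Set.mem_Ioi] at hs
        rw [Real.norm_eq_abs, Real.norm_eq_abs, abs_of_pos ht, abs_of_pos (ht.trans hs)]
        linarith)
      rw [norm_iteratedFDeriv_zero]
      calc ‖t‖ ^ k * ‖G t‖ = ‖t‖ ^ k * ‖∫ s in Set.Ioi t, f s‖ := by rw [hGneg t, norm_neg]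
        _ ≤ _ := this
  | n + 1 =>
    obtain ⟨C, hC⟩ := f.decay' k n
    refine ⟨C, fun t => ?_⟩
    have : ‖iteratedFDeriv ℝ (n + 1) G t‖ = ‖iteratedFDeriv ℝ n (⇑f) t‖ := by
      rw [norm_iteratedFDeriv_eq_norm_iteratedDeriv, iteratedDeriv_succ', hderivG,
        ← norm_iteratedFDeriv_eq_norm_iteratedDeriv]
    rw [this]
    exact hC t
end
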